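/- (Proposition 3.1, state operators.) For i = 1, ..., Nr, let trajectories x_k^{(i)} in R^N satisfy x_{k+1}^{(i)} = A1 x_k^{(i)} + B u_k^{(i)} with x_0^{(i)} = Q zbar_0^{(i)} for given zbar_0^{(i)} in R^n (so (Qperp)^T x_0^{(i)} = 0), and set zbar_k^{(i)} = Q^T x_k^{(i)}. Let L >= 1 and suppose Nr >= n + p and the data matrix Dhat in R^{(n+p) x Nr}, whose i-th column is the concatenation of zbar_0^{(i)} and u_0^{(i)}, has full rank n + p. Then for every l = 1, ..., L, the least squares problem minimizing over Ehat in R^{n x n} and Fhat in R^{n x p} the objective sum over i = 1 to Nr of || Delta_z^{(i)}(l) - ( Ehat zbar_0^{(i)} + Fhat u_0^{(i)} ) ||_2^2, where Delta_z^{(i)}(l) = zbar_{l+1}^{(i)} - ( A~1 zbar_l^{(i)} + B~ u_l^{(i)} + sum over j = 1 to l-1 of ( E_{l-j} zbar_j^{(i)} + F_{l-j} u_j^{(i)} ) ), is uniquely solved at (Ehat, Fhat) = (E_l, F_l), with objective value 0. -/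
import Mathlib


open Matrix Finset

private lemma mulVec_sum' {m n ι : Type*} [Fintype n] (s : Finset ι)
    (A : Matrix m n ℝ) (f : ι → n → ℝ) :
    A *ᵥ (∑ j ∈ s, f j) = ∑ j ∈ s, A *ᵥ f j := by
  exact map_sum A.mulVecLin f s

/-- Proposition 3.1, state operators: stagewise operator
inference uniquely recovers the intrusive non-Markovian state operators
(E_l, F_l) with zero objective value, for each lag l = 1, ..., L. -/
theorem stmt_12 (N n p Nr L : ℕ) (hN : 0 < N) (hn : 0 < n) (hp : 0 < p)
    (hNr : 0 < Nr) (hnN : n < N) (hL : 1 ≤ L)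
    (Q : Matrix (Fin N) (Fin n) ℝ) (Qperp : Matrix (Fin N) (Fin (N - n)) ℝ)
    (hQ : Qᵀ * Q = 1) (hQperp : Qperpᵀ * Qperp = 1) (hQQperp : Qᵀ * Qperp = 0)
    (hsum : Q * Qᵀ + Qperp * Qperpᵀ = 1)
    (A1 : Matrix (Fin N) (Fin N) ℝ) (B : Matrix (Fin N) (Fin p) ℝ)
    (u : Fin Nr → ℕ → Fin p → ℝ)
    (At : Matrix (Fin n) (Fin n) ℝ) (Bt : Matrix (Fin n) (Fin p) ℝ)
    (hAt : At = Qᵀ * A1 * Q) (hBt : Bt = Qᵀ * B)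
    (E : ℕ → Matrix (Fin n) (Fin n) ℝ) (F : ℕ → Matrix (Fin n) (Fin p) ℝ)
    (hE : ∀ j, 1 ≤ j → E j =
      Qᵀ * A1 * Qperp * ((Qperpᵀ * A1 * Qperp) ^ (j - 1)) * (Qperpᵀ * A1 * Q))
    (hF : ∀ j, 1 ≤ j → F j =
      Qᵀ * A1 * Qperp * ((Qperpᵀ * A1 * Qperp) ^ (j - 1)) * (Qperpᵀ * B))
    (zbar0 : Fin Nr → Fin n → ℝ)
    (x : Fin Nr → ℕ → Fin N → ℝ)
    (hx0 : ∀ i, x i 0 = Q *ᵥ zbar0 i)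
    (hx : ∀ i k, x i (k + 1) = A1 *ᵥ x i k + B *ᵥ u i k)
    (zbar : Fin Nr → ℕ → Fin n → ℝ)
    (hzbar : ∀ i k, zbar i k = Qᵀ *ᵥ x i k)
    (Dhat : Matrix (Fin n ⊕ Fin p) (Fin Nr) ℝ)
    (hDhat1 : ∀ (a : Fin n) (i : Fin Nr), Dhat (Sum.inl a) i = zbar0 i a)
    (hDhat2 : ∀ (b : Fin p) (i : Fin Nr), Dhat (Sum.inr b) i = u i 0 b)
    (hNrnp : n + p ≤ Nr) (hrank : Dhat.rank = n + p)
    (Δ : Fin Nr → ℕ → Fin n → ℝ)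
    (hΔ : ∀ i l, Δ i l = zbar i (l + 1) - (At *ᵥ zbar i l + Bt *ᵥ u i l
      + ∑ j ∈ Finset.Ico 1 l, (E (l - j) *ᵥ zbar i j + F (l - j) *ᵥ u i j))) :
    ∀ l, 1 ≤ l → l ≤ L →
      (∑ i, ∑ a, ((Δ i l - (E l *ᵥ zbar0 i + F l *ᵥ u i 0)) a) ^ 2) = 0 ∧
      ∀ (Ehat : Matrix (Fin n) (Fin n) ℝ) (Fhat : Matrix (Fin n) (Fin p) ℝ),
        (∑ i, ∑ a, ((Δ i l - (Ehat *ᵥ zbar0 i + Fhat *ᵥ u i 0)) a) ^ 2)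
          ≤ (∑ i, ∑ a, ((Δ i l - (E l *ᵥ zbar0 i + F l *ᵥ u i 0)) a) ^ 2) →
        Ehat = E l ∧ Fhat = F l := by
  -- notation
  set G : Matrix (Fin (N - n)) (Fin (N - n)) ℝ := Qperpᵀ * A1 * Qperp with hG
  set C : Matrix (Fin (N - n)) (Fin n) ℝ := Qperpᵀ * A1 * Q with hC
  set Dm : Matrix (Fin (N - n)) (Fin p) ℝ := Qperpᵀ * B with hDm
  set S : Matrix (Fin n) (Fin (N - n)) ℝ := Qᵀ * A1 * Qperp with hS
  have hQpQ : Qperpᵀ * Q = 0 := by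
    have := congrArg Matrix.transpose hQQperp
    simpa [Matrix.transpose_mul] using this
  have hz0 : ∀ i, zbar i 0 = zbar0 i := by
    intro i
    rw [hzbar, hx0, Matrix.mulVec_mulVec, hQ, Matrix.one_mulVec]
  have hxdecomp : ∀ i k, x i k = Q *ᵥ zbar i k + Qperp *ᵥ (Qperpᵀ *ᵥ x i k) := by
    intro i k
    rw [hzbar]
    simp only [Matrix.mulVec_mulVec]
    rw [← Matrix.add_mulVec, hsum, Matrix.one_mulVec]
  have hwrec : ∀ i k, Qperpᵀ *ᵥ x i (k + 1)
      = C *ᵥ zbar i k + (G *ᵥ (Qperpᵀ *ᵥ x i k) + Dm *ᵥ u i k) := by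
    intro i k
    rw [hx, Matrix.mulVec_add]
    conv_lhs => rw [hxdecomp i k]
    simp only [Matrix.mulVec_add, Matrix.mulVec_mulVec, hG, hC, hDm,
      Matrix.mul_assoc]
    abel
  have hzrec : ∀ i k, zbar i (k + 1)
      = At *ᵥ zbar i k + (S *ᵥ (Qperpᵀ *ᵥ x i k) + Bt *ᵥ u i k) := by
    intro i k
    rw [hzbar, hx, Matrix.mulVec_add]
    conv_lhs => rw [hxdecomp i k]
    rw [hzbar]
    simp only [Matrix.mulVec_add, Matrix.mulVec_mulVec, hS, hAt, hBt,
      Matrix.mul_assoc]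
    abel
  have hw0 : ∀ i, Qperpᵀ *ᵥ x i 0 = 0 := by
    intro i
    rw [hx0, Matrix.mulVec_mulVec, hQpQ, Matrix.zero_mulVec]
  have hwsum : ∀ i k, Qperpᵀ *ᵥ x i k
      = ∑ j ∈ Finset.range k, (G ^ (k - 1 - j)) *ᵥ (C *ᵥ zbar i j + Dm *ᵥ u i j) := by
    intro i k
    induction k with
    | zero => simpa using hw0 i
    | succ k ih =>
      rw [hwrec, ih, Finset.sum_range_succ, mulVec_sum']
      have hterm : ∀ j ∈ Finset.range k,
          G *ᵥ ((G ^ (k - 1 - j)) *ᵥ (C *ᵥ zbar i j + Dm *ᵥ u i j))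
          = (G ^ (k + 1 - 1 - j)) *ᵥ (C *ᵥ zbar i j + Dm *ᵥ u i j) := by
        intro j hj
        rw [Finset.mem_range] at hj
        have he : k + 1 - 1 - j = (k - 1 - j) + 1 := by omega
        rw [Matrix.mulVec_mulVec, he, pow_succ']
      rw [Finset.sum_congr rfl hterm]
      simp only [Nat.add_sub_cancel, Nat.sub_self, pow_zero, Matrix.one_mulVec]
      abel
  intro l hl1 hlL
  have hl0 : 0 < l := hl1
  -- the residual is exactly zero at (E l, F l)
  have hDel : ∀ i, Δ i l = E l *ᵥ zbar0 i + F l *ᵥ u i 0 := by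
    intro i
    have h1 : S *ᵥ (Qperpᵀ *ᵥ x i l)
        = (E l *ᵥ zbar0 i + F l *ᵥ u i 0)
          + ∑ j ∈ Finset.Ico 1 l, (E (l - j) *ᵥ zbar i j + F (l - j) *ᵥ u i j) := by
      rw [hwsum, mulVec_sum', Finset.range_eq_Ico,
        Finset.sum_eq_sum_Ico_succ_bot hl0]
      congr 1
      · rw [hz0 i] at *
        rw [hE l hl1, hF l hl1]
        simp only [Nat.sub_zero, Matrix.mulVec_add, Matrix.mulVec_mulVec,
          Matrix.mul_assoc, hS, hC, hDm, hG]
      · apply Finset.sum_congr rfl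
        intro j hj
        rw [Finset.mem_Ico] at hj
        have hj1 : 1 ≤ l - j := by omega
        rw [hE _ hj1, hF _ hj1]
        have : l - j - 1 = l - 1 - j := by omega
        rw [this]
        simp only [Matrix.mulVec_add, Matrix.mulVec_mulVec, Matrix.mul_assoc,
          hS, hC, hDm, hG]
    rw [hΔ, hzrec, h1]
    abel
  have hzero : (∑ i, ∑ a, ((Δ i l - (E l *ᵥ zbar0 i + F l *ᵥ u i 0)) a) ^ 2) = 0 := by
    apply Finset.sum_eq_zero
    intro i _
    apply Finset.sum_eq_zero
    intro a _
    rw [hDel i]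
    simp
  refine ⟨hzero, ?_⟩
  intro Ehat Fhat hle
  rw [hzero] at hle
  -- the objective at (Ehat, Fhat) is zero, hence each residual vanishes
  have hnn : ∀ i ∈ (Finset.univ : Finset (Fin Nr)),
      0 ≤ ∑ a, ((Δ i l - (Ehat *ᵥ zbar0 i + Fhat *ᵥ u i 0)) a) ^ 2 := by
    intro i _
    exact Finset.sum_nonneg fun a _ => sq_nonneg _
  have hobj0 : (∑ i, ∑ a, ((Δ i l - (Ehat *ᵥ zbar0 i + Fhat *ᵥ u i 0)) a) ^ 2) = 0 :=
    le_antisymm hle (Finset.sum_nonneg hnn)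
  have h0 : ∀ i a, (Δ i l - (Ehat *ᵥ zbar0 i + Fhat *ᵥ u i 0)) a = 0 := by
    intro i a
    have hi := (Finset.sum_eq_zero_iff_of_nonneg hnn).mp hobj0 i (Finset.mem_univ i)
    have ha := (Finset.sum_eq_zero_iff_of_nonneg
      (fun a _ => sq_nonneg ((Δ i l - (Ehat *ᵥ zbar0 i + Fhat *ᵥ u i 0)) a))).mp hi a
      (Finset.mem_univ a)
    exact pow_eq_zero_iff (two_ne_zero) |>.mp ha
  have hveceq : ∀ i, Ehat *ᵥ zbar0 i + Fhat *ᵥ u i 0 = E l *ᵥ zbar0 i + F l *ᵥ u i 0 := by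
    intro i
    have h : Δ i l - (Ehat *ᵥ zbar0 i + Fhat *ᵥ u i 0) = 0 := funext fun a => h0 i a
    have := sub_eq_zero.mp h
    rw [← this, hDel i]
  -- full-rank data matrix gives injectivity
  have hker : ∀ v : (Fin n ⊕ Fin p) → ℝ, Dhatᵀ *ᵥ v = 0 → v = 0 := by
    have hr : (Dhatᵀ).rank = n + p := by rw [Matrix.rank_transpose]; exact hrank
    have h3 := LinearMap.finrank_range_add_finrank_ker (Dhatᵀ).mulVecLin
    rw [show Module.finrank ℝ (LinearMap.range (Dhatᵀ).mulVecLin) = (Dhatᵀ).rank from rfl,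
      hr, Module.finrank_fintype_fun_eq_card, Fintype.card_sum, Fintype.card_fin,
      Fintype.card_fin] at h3
    have hker0 : Module.finrank ℝ (LinearMap.ker (Dhatᵀ).mulVecLin) = 0 := by omega
    have hbot : LinearMap.ker (Dhatᵀ).mulVecLin = ⊥ := Submodule.finrank_eq_zero.mp hker0
    exact Matrix.ker_mulVecLin_eq_bot_iff.mp hbot
  -- conclude the matrices coincide row by row
  have hrows : ∀ a : Fin n,
      (Sum.elim (fun b => Ehat a b - E l a b) (fun c => Fhat a c - F l a c)
        : (Fin n ⊕ Fin p) → ℝ) = 0 := by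
    intro a
    apply hker
    funext i
    have h := congrFun (hveceq i) a
    simp only [Pi.add_apply, Matrix.mulVec, dotProduct] at h
    simp only [Matrix.mulVec, dotProduct, Matrix.transpose_apply,
      Fintype.sum_sum_type, Sum.elim_inl, Sum.elim_inr, Pi.zero_apply]
    have : (∑ b, Dhat (Sum.inl b) i * (Ehat a b - E l a b))
        + ∑ c, Dhat (Sum.inr c) i * (Fhat a c - F l a c)
        = (∑ b, Ehat a b * zbar0 i b + ∑ c, Fhat a c * u i 0 c)
          - (∑ b, E l a b * zbar0 i b + ∑ c, F l a c * u i 0 c) := by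
      simp only [hDhat1, hDhat2, mul_sub, Finset.sum_sub_distrib]
      ring_nf
      rw [Finset.sum_congr rfl (fun b _ => mul_comm (zbar0 i b) (Ehat a b)),
        Finset.sum_congr rfl (fun b _ => mul_comm (zbar0 i b) (E l a b)),
        Finset.sum_congr rfl (fun c _ => mul_comm (u i 0 c) (Fhat a c)),
        Finset.sum_congr rfl (fun c _ => mul_comm (u i 0 c) (F l a c))]
      ring
    rw [this, h]
    ring
  constructor
  · ext a b
    have := congrFun (hrows a) (Sum.inl b)
    simpa [sub_eq_zero] using this
  · ext a c
    have := congrFun (hrows a) (Sum.inr c)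
    simpa [sub_eq_zero] using this
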